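/- Let f : ℝ^{2n+1} → ℝ be three times continuously differentiable. Then at every point of ℝ^{2n+1} one has the right Bochner-type identity Δ_H(|∇̃_H f|²) = 2⟨∇̃_H f, ∇̃_H(Δ_H f)⟩ + 2 Σ_{i=1}^{2n} |∇̃_H(Xᵢ f)|², where ⟨∇̃_H f, ∇̃_H g⟩ = Σ_{j=1}^{2n} (X̃ⱼf)(X̃ⱼg). -/

import Mathlib

/-- The underlying space `ℝ^{2n+1}` of the Heisenberg group `ℍⁿ`, with coordinates
`(x₁,...,xₙ, y₁,...,yₙ, σ)`. -/
abbrev Hn (n : ℕ) := (Fin n → ℝ) × (Fin n → ℝ) × ℝ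

/-- The standard basis vector in the `xᵢ` direction. -/
noncomputable def ex {n : ℕ} (i : Fin n) : Hn n := (Pi.single i 1, 0, 0)

/-- The standard basis vector in the `yᵢ` direction. -/
noncomputable def ey {n : ℕ} (i : Fin n) : Hn n := (0, Pi.single i 1, 0)

/-- The standard basis vector in the `σ` direction. -/
def es {n : ℕ} : Hn n := (0, 0, 1)

/-- The left-invariant horizontal vector fields of `ℍⁿ`:
`Xᵢ = ∂_{xᵢ} − (yᵢ/2)∂_σ` and `X_{n+i} = ∂_{yᵢ} + (xᵢ/2)∂_σ`. -/
noncomputable def XL {n : ℕ} (i : Fin n ⊕ Fin n) (f : Hn n → ℝ) (p : Hn n) : ℝ :=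
  match i with
  | Sum.inl i => fderiv ℝ f p (ex i) - p.2.1 i / 2 * fderiv ℝ f p es
  | Sum.inr i => fderiv ℝ f p (ey i) + p.1 i / 2 * fderiv ℝ f p es

/-- The right-invariant horizontal vector fields of `ℍⁿ`:
`X̃ᵢ = ∂_{xᵢ} + (yᵢ/2)∂_σ` and `X̃_{n+i} = ∂_{yᵢ} − (xᵢ/2)∂_σ`. -/
noncomputable def XR {n : ℕ} (i : Fin n ⊕ Fin n) (f : Hn n → ℝ) (p : Hn n) : ℝ :=
  match i with
  | Sum.inl i => fderiv ℝ f p (ex i) + p.2.1 i / 2 * fderiv ℝ f p es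
  | Sum.inr i => fderiv ℝ f p (ey i) - p.1 i / 2 * fderiv ℝ f p es

/-- The horizontal Laplacian `Δ_H = Σ_{i=1}^{2n} Xᵢ²` of `ℍⁿ`. -/
noncomputable def lapH {n : ℕ} (f : Hn n → ℝ) (p : Hn n) : ℝ :=
  ∑ i : Fin n ⊕ Fin n, XL i (XL i f) p

/-- The right carré du champ `|∇̃_H f|² = Σ_{i=1}^{2n} (X̃ᵢ f)²`. -/
noncomputable def gammaR {n : ℕ} (f : Hn n → ℝ) (p : Hn n) : ℝ :=
  ∑ i : Fin n ⊕ Fin n, (XR i f p) ^ 2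

section Aux
variable {n : ℕ}

/-- Directional derivative along a fixed vector. -/
noncomputable def Dv (v : Hn n) (f : Hn n → ℝ) (p : Hn n) : ℝ := fderiv ℝ f p v

noncomputable def ee (i : Fin n ⊕ Fin n) : Hn n := Sum.elim ex ey i

noncomputable def aCLM (j : Fin n) : Hn n →L[ℝ] ℝ :=
  (ContinuousLinearMap.proj j).comp (ContinuousLinearMap.fst ℝ (Fin n → ℝ) ((Fin n → ℝ) × ℝ))

noncomputable def bCLM (j : Fin n) : Hn n →L[ℝ] ℝ :=
  ((ContinuousLinearMap.proj j).comp (ContinuousLinearMap.fst ℝ (Fin n → ℝ) ℝ)).comp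
    (ContinuousLinearMap.snd ℝ (Fin n → ℝ) ((Fin n → ℝ) × ℝ))

noncomputable def cc (i : Fin n ⊕ Fin n) : Hn n →L[ℝ] ℝ :=
  match i with
  | Sum.inl i => (2⁻¹ : ℝ) • bCLM i
  | Sum.inr i => (-2⁻¹ : ℝ) • aCLM i

@[simp] lemma aCLM_apply (j : Fin n) (p : Hn n) : aCLM j p = p.1 j := rfl
@[simp] lemma bCLM_apply (j : Fin n) (p : Hn n) : bCLM j p = p.2.1 j := rfl

lemma cc_es (i : Fin n ⊕ Fin n) : cc i (es : Hn n) = 0 := by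
  cases i <;> simp [cc, es]

lemma cc_skew (i j : Fin n ⊕ Fin n) : cc j (ee i : Hn n) = - cc i (ee j) := by
  cases i <;> cases j <;>
    simp [cc, ee, ex, ey, Pi.single_apply, eq_comm] <;> split <;> simp_all

lemma XR_eq (i : Fin n ⊕ Fin n) (f : Hn n → ℝ) (p : Hn n) :
    XR i f p = Dv (ee i) f p + cc i p * Dv es f p := by
  cases i <;>
    simp only [XR, Dv, ee, cc, Sum.elim_inl, Sum.elim_inr, ContinuousLinearMap.smul_apply,
      bCLM_apply, aCLM_apply, smul_eq_mul] <;> ring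

lemma XL_eq (i : Fin n ⊕ Fin n) (f : Hn n → ℝ) (p : Hn n) :
    XL i f p = Dv (ee i) f p - cc i p * Dv es f p := by
  cases i <;>
    simp only [XL, Dv, ee, cc, Sum.elim_inl, Sum.elim_inr, ContinuousLinearMap.smul_apply,
      bCLM_apply, aCLM_apply, smul_eq_mul] <;> ring

lemma Dv_contDiff {m k : WithTop ℕ∞} {f : Hn n → ℝ} (hf : ContDiff ℝ k f)
    (h : m + 1 ≤ k) (v : Hn n) : ContDiff ℝ m (Dv v f) :=
  (hf.fderiv_right h).clm_apply contDiff_const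

lemma XR_contDiff {m k : WithTop ℕ∞} {f : Hn n → ℝ} (hf : ContDiff ℝ k f)
    (h : m + 1 ≤ k) (i : Fin n ⊕ Fin n) : ContDiff ℝ m (XR i f) := by
  have : XR i f = fun p => Dv (ee i) f p + cc i p * Dv es f p := funext (XR_eq i f)
  rw [this]
  exact (Dv_contDiff hf h _).add (((cc i).contDiff).mul (Dv_contDiff hf h _))

lemma XL_contDiff {m k : WithTop ℕ∞} {f : Hn n → ℝ} (hf : ContDiff ℝ k f)
    (h : m + 1 ≤ k) (i : Fin n ⊕ Fin n) : ContDiff ℝ m (XL i f) := by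
  have : XL i f = fun p => Dv (ee i) f p - cc i p * Dv es f p := funext (XL_eq i f)
  rw [this]
  exact (Dv_contDiff hf h _).sub (((cc i).contDiff).mul (Dv_contDiff hf h _))

lemma Dv_sum {ι : Type*} (s : Finset ι) (g : ι → Hn n → ℝ) (p : Hn n)
    (hg : ∀ k ∈ s, DifferentiableAt ℝ (g k) p) (v : Hn n) :
    Dv v (fun q => ∑ k ∈ s, g k q) p = ∑ k ∈ s, Dv v (g k) p := by
  simp [Dv, fderiv_fun_sum hg]

lemma Dv_add {f g : Hn n → ℝ} (hf : DifferentiableAt ℝ f p) (hg : DifferentiableAt ℝ g p)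
    (v : Hn n) : Dv v (fun q => f q + g q) p = Dv v f p + Dv v g p := by
  simp [Dv, fderiv_fun_add hf hg]

lemma Dv_mul {f g : Hn n → ℝ} {p : Hn n} (hf : DifferentiableAt ℝ f p)
    (hg : DifferentiableAt ℝ g p) (v : Hn n) :
    Dv v (fun q => f q * g q) p = Dv v f p * g p + f p * Dv v g p := by
  simp [Dv, fderiv_fun_mul hf hg]; ring

lemma Dv_clm (L : Hn n →L[ℝ] ℝ) (v p : Hn n) : Dv v (⇑L) p = L v := by
  simp [Dv, L.fderiv]

lemma Dv_comm {f : Hn n → ℝ} (hf : ContDiff ℝ 2 f) (v w p : Hn n) :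
    Dv v (Dv w f) p = Dv w (Dv v f) p := by
  have hdf : Differentiable ℝ f := hf.differentiable two_ne_zero
  have hdf' : DifferentiableAt ℝ (fderiv ℝ f) p := by
    have h1 : ContDiff ℝ 1 (fderiv ℝ f) := hf.fderiv_right (by norm_num)
    exact (h1.differentiable one_ne_zero).differentiableAt
  have hf'' := hdf'.hasFDerivAt
  have key : ∀ u : Hn n, fderiv ℝ (fun q => fderiv ℝ f q u) p
      = (fderiv ℝ (fderiv ℝ f) p).flip u := by
    intro u
    have h2 := hf''.clm_apply (hasFDerivAt_const u p)
    have h3 := h2.fderiv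
    rwa [ContinuousLinearMap.comp_zero, zero_add] at h3
  show fderiv ℝ (fun q => fderiv ℝ f q w) p v = fderiv ℝ (fun q => fderiv ℝ f q v) p w
  rw [key w, key v]
  simpa using second_derivative_symmetric (fun y => (hdf y).hasFDerivAt) hf'' v w

lemma Dv_sub {f g : Hn n → ℝ} {p : Hn n} (hf : DifferentiableAt ℝ f p)
    (hg : DifferentiableAt ℝ g p) (v : Hn n) :
    Dv v (fun q => f q - g q) p = Dv v f p - Dv v g p := by
  simp [Dv, fderiv_fun_sub hf hg]

lemma Dv_const_mul {g : Hn n → ℝ} {p : Hn n} (hg : DifferentiableAt ℝ g p) (c : ℝ) (v : Hn n) :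
    Dv v (fun q => c * g q) p = c * Dv v g p := by
  simp [Dv, fderiv_const_mul hg c]

lemma XL_sum {ι : Type*} (s : Finset ι) (g : ι → Hn n → ℝ) (p : Hn n)
    (hg : ∀ k ∈ s, DifferentiableAt ℝ (g k) p) (i : Fin n ⊕ Fin n) :
    XL i (fun q => ∑ k ∈ s, g k q) p = ∑ k ∈ s, XL i (g k) p := by
  rw [XL_eq, Dv_sum s g p hg, Dv_sum s g p hg, Finset.mul_sum, ← Finset.sum_sub_distrib]
  exact Finset.sum_congr rfl fun k _ => (XL_eq i (g k) p).symm

lemma XR_sum {ι : Type*} (s : Finset ι) (g : ι → Hn n → ℝ) (p : Hn n)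
    (hg : ∀ k ∈ s, DifferentiableAt ℝ (g k) p) (j : Fin n ⊕ Fin n) :
    XR j (fun q => ∑ k ∈ s, g k q) p = ∑ k ∈ s, XR j (g k) p := by
  rw [XR_eq, Dv_sum s g p hg, Dv_sum s g p hg, Finset.mul_sum, ← Finset.sum_add_distrib]
  exact Finset.sum_congr rfl fun k _ => (XR_eq j (g k) p).symm

lemma XL_mul {g h : Hn n → ℝ} {p : Hn n} (hg : DifferentiableAt ℝ g p)
    (hh : DifferentiableAt ℝ h p) (i : Fin n ⊕ Fin n) :
    XL i (fun q => g q * h q) p = XL i g p * h p + g p * XL i h p := by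
  rw [XL_eq, Dv_mul hg hh, Dv_mul hg hh, XL_eq, XL_eq]; ring

lemma XL_const_mul {g : Hn n → ℝ} {p : Hn n} (hg : DifferentiableAt ℝ g p) (c : ℝ)
    (i : Fin n ⊕ Fin n) :
    XL i (fun q => c * g q) p = c * XL i g p := by
  rw [XL_eq, Dv_const_mul hg, Dv_const_mul hg, XL_eq]; ring

lemma Dv_XR {f : Hn n → ℝ} (hf : ContDiff ℝ 2 f) (v : Hn n) (j : Fin n ⊕ Fin n) (p : Hn n) :
    Dv v (XR j f) p
      = Dv v (Dv (ee j) f) p + cc j v * Dv es f p + cc j p * Dv v (Dv es f) p := by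
  have h11 : (1 : WithTop ℕ∞) + 1 ≤ 2 := by norm_num
  have d1 : DifferentiableAt ℝ (Dv (ee j) f) p :=
    ((Dv_contDiff hf h11 (ee j)).differentiable one_ne_zero).differentiableAt
  have d2 : DifferentiableAt ℝ (Dv es f) p :=
    ((Dv_contDiff hf h11 es).differentiable one_ne_zero).differentiableAt
  have dc : DifferentiableAt ℝ (⇑(cc j) : Hn n → ℝ) p := (cc j).differentiable.differentiableAt
  have hfe : XR j f = fun q => Dv (ee j) f q + (fun q => cc j q * Dv es f q) q :=
    funext (XR_eq j f)
  rw [hfe, Dv_add (g := fun q => cc j q * Dv es f q) d1 (dc.mul d2) v, Dv_mul (f := ⇑(cc j)) (g := Dv es f) dc d2 v, Dv_clm]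
  ring

lemma Dv_XL {f : Hn n → ℝ} (hf : ContDiff ℝ 2 f) (v : Hn n) (j : Fin n ⊕ Fin n) (p : Hn n) :
    Dv v (XL j f) p
      = Dv v (Dv (ee j) f) p - cc j v * Dv es f p - cc j p * Dv v (Dv es f) p := by
  have h11 : (1 : WithTop ℕ∞) + 1 ≤ 2 := by norm_num
  have d1 : DifferentiableAt ℝ (Dv (ee j) f) p :=
    ((Dv_contDiff hf h11 (ee j)).differentiable one_ne_zero).differentiableAt
  have d2 : DifferentiableAt ℝ (Dv es f) p :=
    ((Dv_contDiff hf h11 es).differentiable one_ne_zero).differentiableAt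
  have dc : DifferentiableAt ℝ (⇑(cc j) : Hn n → ℝ) p := (cc j).differentiable.differentiableAt
  have hfe : XL j f = fun q => Dv (ee j) f q - (fun q => cc j q * Dv es f q) q :=
    funext (XL_eq j f)
  rw [hfe, Dv_sub (g := fun q => cc j q * Dv es f q) d1 (dc.mul d2) v, Dv_mul (f := ⇑(cc j)) (g := Dv es f) dc d2 v, Dv_clm]
  ring

lemma XLXR_comm {f : Hn n → ℝ} (hf : ContDiff ℝ 2 f) (i j : Fin n ⊕ Fin n) :
    XL i (XR j f) = XR j (XL i f) := by
  funext p
  rw [XL_eq i (XR j f) p, XR_eq j (XL i f) p,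
    Dv_XR hf (ee i) j p, Dv_XR hf es j p, Dv_XL hf (ee j) i p, Dv_XL hf es i p,
    cc_es i, cc_es j, cc_skew i j,
    show Dv es (Dv (ee j) f) p = Dv (ee j) (Dv es f) p from Dv_comm hf es (ee j) p,
    show Dv es (Dv (ee i) f) p = Dv (ee i) (Dv es f) p from Dv_comm hf es (ee i) p,
    show Dv (ee j) (Dv (ee i) f) p = Dv (ee i) (Dv (ee j) f) p from Dv_comm hf (ee j) (ee i) p]
  ring

end Aux

/-- The right Bochner-type identity in `ℍⁿ`: for `f ∈ C³(ℝ^{2n+1})`,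
`Δ_H(|∇̃_H f|²) = 2⟨∇̃_H f, ∇̃_H(Δ_H f)⟩ + 2 Σᵢ |∇̃_H(Xᵢ f)|²`. -/
theorem right_bochner_identity_Hn {n : ℕ} (f : Hn n → ℝ) (hf : ContDiff ℝ 3 f) (p : Hn n) :
    lapH (gammaR f) p
      = 2 * ∑ j : Fin n ⊕ Fin n, XR j f p * XR j (lapH f) p
        + 2 * ∑ i : Fin n ⊕ Fin n, ∑ j : Fin n ⊕ Fin n, (XR j (XL i f) p) ^ 2 := by
  have h21 : (2 : WithTop ℕ∞) + 1 ≤ 3 := by norm_num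
  have h11 : (1 : WithTop ℕ∞) + 1 ≤ 2 := by norm_num
  have h2 : ContDiff ℝ 2 f := hf.of_le (by norm_num)
  have hXR2 : ∀ j, ContDiff ℝ 2 (XR j f) := fun j => XR_contDiff hf h21 j
  have hXL2 : ∀ i, ContDiff ℝ 2 (XL i f) := fun i => XL_contDiff hf h21 i
  have dXR : ∀ j, Differentiable ℝ (XR j f) := fun j => (hXR2 j).differentiable (by norm_num)
  have dXRXL : ∀ i j, Differentiable ℝ (XR j (XL i f)) :=
    fun i j => (XR_contDiff (hXL2 i) h11 j).differentiable one_ne_zero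
  have dXLXL : ∀ i, Differentiable ℝ (XL i (XL i f)) :=
    fun i => (XL_contDiff (hXL2 i) h11 i).differentiable one_ne_zero
  have hgam : ∀ i, XL i (gammaR f)
      = fun q => ∑ j : Fin n ⊕ Fin n, 2 * XR j f q * XR j (XL i f) q := by
    intro i
    funext q
    show XL i (fun q' => ∑ j : Fin n ⊕ Fin n, XR j f q' ^ 2) q = _
    rw [XL_sum Finset.univ (fun j q' => XR j f q' ^ 2) q (fun j _ => (dXR j q).pow 2) i]
    refine Finset.sum_congr rfl fun j _ => ?_
    have e1 : (fun q' => XR j f q' ^ 2) = fun q' => XR j f q' * XR j f q' := by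
      funext q'; ring
    rw [e1, XL_mul (g := XR j f) (h := XR j f) (dXR j q) (dXR j q) i,
      show XL i (XR j f) = XR j (XL i f) from XLXR_comm h2 i j]
    ring
  have step2 : ∀ i, XL i (XL i (gammaR f)) p
      = ∑ j : Fin n ⊕ Fin n,
          (2 * (XR j (XL i f) p) ^ 2 + 2 * XR j f p * XR j (XL i (XL i f)) p) := by
    intro i
    rw [hgam i, XL_sum Finset.univ (fun j q => 2 * XR j f q * XR j (XL i f) q) p
      (fun j _ => ((dXR j p).const_mul 2).mul (dXRXL i j p)) i]
    refine Finset.sum_congr rfl fun j _ => ?_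
    rw [XL_mul (g := fun q => 2 * XR j f q) (h := XR j (XL i f))
        ((dXR j p).const_mul 2) (dXRXL i j p) i,
      XL_const_mul (dXR j p) 2 i,
      show XL i (XR j f) = XR j (XL i f) from XLXR_comm h2 i j,
      show XL i (XR j (XL i f)) = XR j (XL i (XL i f)) from XLXR_comm (hXL2 i) i j]
    ring
  have hlap : ∀ j, XR j (lapH f) p = ∑ i : Fin n ⊕ Fin n, XR j (XL i (XL i f)) p := by
    intro j
    show XR j (fun q => ∑ i : Fin n ⊕ Fin n, XL i (XL i f) q) p = _
    exact XR_sum Finset.univ (fun i q => XL i (XL i f) q) p (fun i _ => dXLXL i p) j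
  calc lapH (gammaR f) p = ∑ i : Fin n ⊕ Fin n, XL i (XL i (gammaR f)) p := rfl
    _ = ∑ i : Fin n ⊕ Fin n, ∑ j : Fin n ⊕ Fin n,
          (2 * (XR j (XL i f) p) ^ 2 + 2 * XR j f p * XR j (XL i (XL i f)) p) :=
        Finset.sum_congr rfl fun i _ => step2 i
    _ = _ := by
        have hterm : ∀ j, XR j f p * XR j (lapH f) p
            = ∑ i : Fin n ⊕ Fin n, XR j f p * XR j (XL i (XL i f)) p := fun j => by
          rw [hlap j, Finset.mul_sum]
        simp only [Finset.sum_add_distrib, hterm, Finset.mul_sum]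
        rw [add_comm]
        congr 1
        rw [Finset.sum_comm]
        exact Finset.sum_congr rfl fun j _ => Finset.sum_congr rfl fun i _ => by ring
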